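/- Let ν be a measure on 𝒮 with ∫_𝒮 (1 − s_1) ν(ds) < ∞ and let f ∈ 𝒯. Then for every x > 0 the function s ↦ P_f(x, s) − f(x) is ν-integrable on 𝒮, so that Lf(x) := ∫_𝒮 ( P_f(x, s) − f(x) ) ν(ds) is well defined and finite; moreover sup_{x∈[a,b]} |Lf(x)| < ∞ for all 0 < a < b. -/

import Mathlib

/-!
For `x ∈ [a, b]` and `s ∈ 𝒮`, the product `P_f(x, s)` lies between its first factor
`f(x + ln s₁)` and that factor minus the Weierstrass error `∑_{n ≥ 2} (1 - f(x + ln sₙ))`.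
A factor differs from `1` only if `sₙ ≥ e^{-x}`, so the error is at most
`e^b ∑_{n ≥ 2} sₙ ≤ e^b (1 - s₁)`. The first factor differs from `f x` by at most
`C · (-ln s₁) ≲ 1 - s₁` when `s₁` is close to `1`, thanks to the Dini-derivative bound, and by
at most `1 ≲ 1 - s₁` otherwise. Hence `|P_f(x, s) - f x| ≤ K (1 - s₁)` uniformly on `[a, b]`,
and `1 - s₁` is `ν`-integrable.
-/

open MeasureTheory Filter Set Topology

/-- Upper right Dini derivative, as a value in `EReal = [-∞,∞]`. -/
noncomputable def diniE (f : ℝ → ℝ) (x : ℝ) : EReal :=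
  Filter.limsup (fun h : ℝ => (((f (x + h) - f x) / h : ℝ) : EReal))
    (nhdsWithin 0 (Set.Ioi 0))
/-- The class 𝒯: nonincreasing `f : ℝ → [0,1]`, equal to `1` on `(-∞,0)`,
continuous on `(0,∞)`, tending to `0` at `+∞`, with upper right Dini derivative
finite and bounded on every compact subinterval of `(0,∞)`. -/
def MemT (f : ℝ → ℝ) : Prop :=
  Antitone f ∧ (∀ x, f x ∈ Set.Icc (0 : ℝ) 1) ∧ (∀ x < (0 : ℝ), f x = 1) ∧
    ContinuousOn f (Set.Ioi 0) ∧ Filter.Tendsto f Filter.atTop (nhds 0) ∧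
    ∀ s t : ℝ, 0 < s → s < t →
      ∃ C : ℝ, ∀ x ∈ Set.Icc s t, -(C : EReal) ≤ diniE f x ∧ diniE f x ≤ (C : EReal)
/-- The simplex 𝒮 of nonincreasing nonnegative sequences with total sum at most 1
(indexed from `0`, so `s 0` plays the role of `s₁`). -/
def fragSimplex : Set (ℕ → ℝ) :=
  {s | (∀ n, s (n + 1) ≤ s n) ∧ (∀ n, 0 ≤ s n) ∧ Summable s ∧ (∑' n, s n) ≤ 1}
/-- The infinite product `P_f(x,s) = ∏_{n : s n > 0} f (x + ln (s n))`, realised as the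
limit (= infimum, by antitonicity of partial products of `[0,1]`-valued factors) of the
partial products; factors with `s n = 0` are interpreted as `1`. -/
noncomputable def prodP (f : ℝ → ℝ) (x : ℝ) (s : ℕ → ℝ) : ℝ :=
  ⨅ N : ℕ, ∏ n ∈ Finset.range N, (if s n = 0 then (1 : ℝ) else f (x + Real.log (s n)))

lemma Finset.one_sub_sum_le_prod {ι : Type*} (t : Finset ι) {g : ι → ℝ}
    (h0 : ∀ i, 0 ≤ g i) (h1 : ∀ i, g i ≤ 1) :
    1 - ∑ i ∈ t, (1 - g i) ≤ ∏ i ∈ t, g i := by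
  classical
  induction t using Finset.induction_on with
  | empty => simp
  | insert j t hj ih =>
    rw [Finset.prod_insert hj, Finset.sum_insert hj]
    have hS : 0 ≤ ∑ i ∈ t, (1 - g i) := Finset.sum_nonneg fun i _ => sub_nonneg.2 (h1 i)
    nlinarith [mul_le_mul_of_nonneg_left ih (h0 j), h1 j]

section PartialProducts

variable {g : ℕ → ℝ}

lemma iInf_prod_range_le_head (h0 : ∀ n, 0 ≤ g n) :
    ⨅ N : ℕ, ∏ n ∈ Finset.range N, g n ≤ g 0 := by
  have hbdd : BddBelow (range fun N => ∏ n ∈ Finset.range N, g n) :=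
    ⟨0, by rintro _ ⟨N, rfl⟩; exact Finset.prod_nonneg fun n _ => h0 n⟩
  simpa using ciInf_le hbdd 1

lemma head_sub_le_iInf_prod_range (h0 : ∀ n, 0 ≤ g n) (h1 : ∀ n, g n ≤ 1) {T : ℝ}
    (hT : ∀ M, ∑ i ∈ Finset.range M, (1 - g (i + 1)) ≤ T) :
    g 0 - T ≤ ⨅ N : ℕ, ∏ n ∈ Finset.range N, g n := by
  refine le_ciInf fun N => ?_
  cases N with
  | zero => linarith [h1 0, Finset.prod_range_zero g, show (0 : ℝ) ≤ T by simpa using hT 0]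
  | succ M =>
    rw [Finset.prod_range_succ']
    have hW := (Finset.range M).one_sub_sum_le_prod (fun i => h0 (i + 1)) (fun i => h1 (i + 1))
    nlinarith [mul_le_mul_of_nonneg_right hW (h0 0), hT M, h1 0, h0 0,
      Finset.sum_nonneg fun i (_ : i ∈ Finset.range M) => sub_nonneg.2 (h1 (i + 1))]

end PartialProducts

lemma frequently_lt_slope_of_lt_diniE {f : ℝ → ℝ} {y r : ℝ} (h : (r : EReal) < diniE f y) :
    ∃ᶠ z in 𝓝[>] y, r < slope f y z := by
  have hfreq : ∃ᶠ h in 𝓝[>] (0 : ℝ), (r : EReal) < (((f (y + h) - f y) / h : ℝ) : EReal) :=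
    frequently_lt_of_lt_limsup (by isBoundedDefault) h
  have hmap : map (y + ·) (𝓝[>] (0 : ℝ)) = 𝓝[>] y := by simp
  rw [← hmap, frequently_map]
  refine hfreq.mono fun h hh => ?_
  rw [slope_def_field, add_sub_cancel_left]
  exact_mod_cast hh

lemma sub_le_mul_of_neg_le_diniE {f : ℝ → ℝ} {u v C : ℝ} (huv : u ≤ v)
    (hcont : ContinuousOn f (Icc u v)) (hd : ∀ y ∈ Ico u v, -(C : EReal) ≤ diniE f y) :
    f u - f v ≤ C * (v - u) := by
  have hfence : ∀ y ∈ Icc u v, -f y ≤ -f u + C * (y - u) := by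
    refine image_le_of_liminf_slope_right_le_deriv_boundary (B' := fun _ => C) hcont.neg
      (by simp) (by fun_prop) (fun y _ => ?_) fun y hy r hr => ?_
    · simpa using (((hasDerivWithinAt_id y (Ici y)).sub_const u).const_mul C).const_add (-f u)
    · have hrC : ((-r : ℝ) : EReal) < -(C : EReal) := by
        rw [EReal.coe_neg]; exact EReal.neg_lt_neg_iff.2 (by exact_mod_cast hr)
      refine (frequently_lt_slope_of_lt_diniE (hrC.trans_le (hd y hy))).mono fun z hz => ?_
      simp only [slope_fun_def_field, Pi.neg_apply] at hz ⊢
      rw [show (-f z - -f y) / (z - y) = -((f z - f y) / (z - y)) by ring]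
      linarith
  linarith [hfence v ⟨huv, le_rfl⟩]

lemma Real.neg_log_le_exp_mul_one_sub {c t : ℝ} (ht : Real.exp (-c) ≤ t) (ht1 : t ≤ 1) :
    -Real.log t ≤ Real.exp c * (1 - t) := by
  have htpos : 0 < t := (Real.exp_pos _).trans_le ht
  have hinv : t⁻¹ ≤ Real.exp c := by
    simpa [Real.exp_neg] using inv_anti₀ (Real.exp_pos (-c)) ht
  calc -Real.log t ≤ t⁻¹ - 1 := by linarith [Real.one_sub_inv_le_log_of_pos htpos]
    _ = t⁻¹ * (1 - t) := by field_simp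
    _ ≤ Real.exp c * (1 - t) := by gcongr

namespace fragSimplex

variable {s : ℕ → ℝ}

lemma sum_range_succ_le_one_sub_head (hs : s ∈ fragSimplex) (M : ℕ) :
    ∑ i ∈ Finset.range M, s (i + 1) ≤ 1 - s 0 := by
  obtain ⟨-, hpos, hsum, hle⟩ := hs
  have := hsum.sum_le_tsum (Finset.range (M + 1)) fun i _ => hpos i
  rw [Finset.sum_range_succ'] at this
  linarith

lemma head_le_one (hs : s ∈ fragSimplex) : s 0 ≤ 1 := by
  simpa using sum_range_succ_le_one_sub_head hs 0

end fragSimplex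

noncomputable def prodFactor (f : ℝ → ℝ) (x : ℝ) (s : ℕ → ℝ) (n : ℕ) : ℝ :=
  if s n = 0 then 1 else f (x + Real.log (s n))

section Factors

variable {f : ℝ → ℝ} {x : ℝ} {s : ℕ → ℝ}

lemma prodFactor_nonneg (hf : ∀ y, 0 ≤ f y) (n : ℕ) : 0 ≤ prodFactor f x s n := by
  unfold prodFactor; split_ifs <;> simp [hf]

lemma prodFactor_le_one (hf : ∀ y, f y ≤ 1) (n : ℕ) : prodFactor f x s n ≤ 1 := by
  unfold prodFactor; split_ifs <;> simp [hf]

lemma one_sub_prodFactor_le (hf0 : ∀ y, 0 ≤ f y) (hneg : ∀ y < 0, f y = 1) {n : ℕ}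
    (hs : 0 ≤ s n) : 1 - prodFactor f x s n ≤ Real.exp x * s n := by
  unfold prodFactor
  split_ifs with h
  · simp [h]
  by_cases hxs : x + Real.log (s n) < 0
  · rw [hneg _ hxs, sub_self]; positivity
  · have hsn : 0 < s n := lt_of_le_of_ne hs (Ne.symm h)
    have : 1 ≤ Real.exp x * s n := by
      rw [← Real.exp_log hsn, ← Real.exp_add]
      exact Real.one_le_exp (by linarith)
    linarith [hf0 (x + Real.log (s n))]

lemma measurable_prodP (hf : Measurable f) (x : ℝ) : Measurable (prodP f x) := by
  refine Measurable.iInf fun N => Finset.measurable_prod _ fun n _ => ?_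
  have hφ : Measurable fun t : ℝ => if t = 0 then (1 : ℝ) else f (x + Real.log t) :=
    Measurable.ite (measurableSet_singleton 0) measurable_const
      (hf.comp (measurable_const.add Real.measurable_log))
  exact hφ.comp (measurable_pi_apply n)

lemma prodP_le_prodFactor_zero (hf0 : ∀ y, 0 ≤ f y) : prodP f x s ≤ prodFactor f x s 0 :=
  iInf_prod_range_le_head (prodFactor_nonneg hf0)

lemma prodFactor_zero_sub_le_prodP (hf0 : ∀ y, 0 ≤ f y) (hf1 : ∀ y, f y ≤ 1)
    (hneg : ∀ y < 0, f y = 1) (hs : s ∈ fragSimplex) :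
    prodFactor f x s 0 - Real.exp x * (1 - s 0) ≤ prodP f x s := by
  refine head_sub_le_iInf_prod_range (prodFactor_nonneg hf0) (prodFactor_le_one hf1) fun M => ?_
  calc ∑ i ∈ Finset.range M, (1 - prodFactor f x s (i + 1))
      ≤ ∑ i ∈ Finset.range M, Real.exp x * s (i + 1) :=
        Finset.sum_le_sum fun i _ => one_sub_prodFactor_le hf0 hneg (hs.2.1 _)
    _ ≤ Real.exp x * (1 - s 0) := by
        rw [← Finset.mul_sum]
        gcongr
        exact fragSimplex.sum_range_succ_le_one_sub_head hs M

lemma le_prodFactor_zero (hf : Antitone f) (hf1 : ∀ y, f y ≤ 1) (hs : s ∈ fragSimplex) :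
    f x ≤ prodFactor f x s 0 := by
  unfold prodFactor
  split_ifs with h
  · exact hf1 x
  · exact hf (by linarith [Real.log_nonpos (hs.2.1 0) (fragSimplex.head_le_one hs)])

end Factors

/-- The threshold `s₁ ≥ e^{-a/2}` keeps `x + ln s₁` inside `[a/2, b]`, where the Dini bound
applies; below it, `1 - s₁ ≥ 1 - e^{-a/2}` and the trivial bound `1` suffices. -/
lemma exists_prodFactor_zero_sub_le {f : ℝ → ℝ} (hf : MemT f) {a b : ℝ} (ha : 0 < a)
    (hab : a < b) :
    ∃ K, ∀ x ∈ Icc a b, ∀ s ∈ fragSimplex, prodFactor f x s 0 - f x ≤ K * (1 - s 0) := by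
  obtain ⟨-, hbox, -, hcont, -, hdini⟩ := hf
  obtain ⟨C, hC⟩ := hdini (a / 2) b (by linarith) (by linarith)
  have hδ : 0 < 1 - Real.exp (-(a / 2)) := by
    linarith [Real.exp_lt_one_iff.2 (by linarith : -(a / 2) < 0)]
  set K₁ := |C| * Real.exp (a / 2)
  set K₂ := (1 - Real.exp (-(a / 2)))⁻¹
  refine ⟨K₁ + K₂, fun x hx s hs => ?_⟩
  have hs1 : s 0 ≤ 1 := fragSimplex.head_le_one hs
  rcases lt_or_ge (s 0) (Real.exp (-(a / 2))) with hsmall | hlarge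
  · calc prodFactor f x s 0 - f x ≤ 1 := by
          linarith [prodFactor_le_one (x := x) (s := s) (fun y => (hbox y).2) 0, (hbox x).1]
      _ ≤ K₂ * (1 - s 0) := by rw [inv_mul_eq_div, one_le_div hδ]; linarith
      _ ≤ (K₁ + K₂) * (1 - s 0) := by gcongr; exact le_add_of_nonneg_left (by positivity)
  · have hs0 : 0 < s 0 := (Real.exp_pos _).trans_le hlarge
    set u := x + Real.log (s 0)
    have hau : a / 2 ≤ u := by linarith [hx.1, (Real.le_log_iff_exp_le hs0).2 hlarge]
    have hux : u ≤ x := by linarith [Real.log_nonpos hs0.le hs1]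
    have hdiff : f u - f x ≤ |C| * (x - u) := by
      refine sub_le_mul_of_neg_le_diniE hux
        (hcont.mono fun y hy => lt_of_lt_of_le (by linarith) hy.1) fun y hy => ?_
      refine le_trans ?_ (hC y ⟨hau.trans hy.1, hy.2.le.trans hx.2⟩).1
      exact EReal.neg_le_neg_iff.2 (EReal.coe_le_coe_iff.2 (le_abs_self C))
    calc prodFactor f x s 0 - f x = f u - f x := by simp [prodFactor, hs0.ne', u]
      _ ≤ |C| * (-Real.log (s 0)) := by simpa [u] using hdiff
      _ ≤ |C| * (Real.exp (a / 2) * (1 - s 0)) :=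
          by gcongr; exact Real.neg_log_le_exp_mul_one_sub hlarge hs1
      _ ≤ (K₁ + K₂) * (1 - s 0) := by
          rw [← mul_assoc]; gcongr; exact le_add_of_nonneg_right (by positivity)

lemma exists_abs_prodP_sub_le {f : ℝ → ℝ} (hf : MemT f) {a b : ℝ} (ha : 0 < a) (hab : a < b) :
    ∃ K, ∀ x ∈ Icc a b, ∀ s ∈ fragSimplex, |prodP f x s - f x| ≤ K * (1 - s 0) := by
  obtain ⟨K, hK⟩ := exists_prodFactor_zero_sub_le hf ha hab
  obtain ⟨hmono, hbox, hneg, -⟩ := hf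
  have hf0 : ∀ y, 0 ≤ f y := fun y => (hbox y).1
  have hf1 : ∀ y, f y ≤ 1 := fun y => (hbox y).2
  refine ⟨K + Real.exp b, fun x hx s hs => ?_⟩
  have herr : Real.exp x * (1 - s 0) ≤ Real.exp b * (1 - s 0) := by
    gcongr
    · linarith [fragSimplex.head_le_one hs]
    · exact hx.2
  have hfirst := hK x hx s hs
  have hupper := prodP_le_prodFactor_zero (x := x) (s := s) hf0
  have hlower := prodFactor_zero_sub_le_prodP (x := x) hf0 hf1 hneg hs
  have hle := le_prodFactor_zero (x := x) hmono hf1 hs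
  have hnonneg : 0 ≤ Real.exp b * (1 - s 0) :=
    mul_nonneg (Real.exp_pos b).le (sub_nonneg.2 (fragSimplex.head_le_one hs))
  rw [abs_le, add_mul]
  constructor <;> linarith

lemma integrable_one_sub_head {ν : Measure fragSimplex}
    (hν : ∫⁻ s, ENNReal.ofReal (1 - (s : ℕ → ℝ) 0) ∂ν < ⊤) :
    Integrable (fun s : fragSimplex => 1 - (s : ℕ → ℝ) 0) ν := by
  have hmeas : Measurable fun s : fragSimplex => 1 - (s : ℕ → ℝ) 0 :=
    measurable_const.sub ((measurable_pi_apply 0).comp measurable_subtype_coe)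
  have hnonneg : ∀ s : fragSimplex, 0 ≤ 1 - (s : ℕ → ℝ) 0 :=
    fun s => sub_nonneg.2 (fragSimplex.head_le_one s.2)
  exact ⟨hmeas.aestronglyMeasurable, (hasFiniteIntegral_iff_ofReal (ae_of_all _ hnonneg)).2 hν⟩

/-- For `f ∈ 𝒯` and every `x > 0` the map `s ↦ P_f(x,s) - f(x)` is `ν`-integrable, so
`Lf(x) = ∫_𝒮 (P_f(x,s) - f(x)) ν(ds)` is well defined and finite; moreover `Lf` is
bounded on every compact subinterval `[a,b]` of `(0,∞)`. -/
theorem stmt_9 (ν : MeasureTheory.Measure fragSimplex)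
    (hν : ∫⁻ s, ENNReal.ofReal (1 - (s : ℕ → ℝ) 0) ∂ν < ⊤)
    (f : ℝ → ℝ) (hf : MemT f) :
    (∀ x : ℝ, 0 < x →
        MeasureTheory.Integrable (fun s : fragSimplex => prodP f x (s : ℕ → ℝ) - f x) ν) ∧
      ∀ a b : ℝ, 0 < a → a < b → ∃ C : ℝ, ∀ x ∈ Set.Icc a b,
        |∫ s, (prodP f x (s : ℕ → ℝ) - f x) ∂ν| ≤ C := by
  have hw := integrable_one_sub_head hν
  refine ⟨fun x hx => ?_, fun a b ha hab => ?_⟩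
  · obtain ⟨K, hK⟩ := exists_abs_prodP_sub_le hf hx (lt_add_one x)
    have hmeas : Measurable fun s : fragSimplex => prodP f x (s : ℕ → ℝ) - f x :=
      ((measurable_prodP hf.1.measurable x).comp measurable_subtype_coe).sub_const _
    exact (hw.const_mul K).mono' hmeas.aestronglyMeasurable
      (ae_of_all _ fun s => hK x ⟨le_rfl, by linarith⟩ s s.2)
  · obtain ⟨K, hK⟩ := exists_abs_prodP_sub_le hf ha hab
    refine ⟨∫ s, K * (1 - (s : ℕ → ℝ) 0) ∂ν, fun x hx => ?_⟩
    rw [← Real.norm_eq_abs]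
    exact norm_integral_le_of_norm_le (hw.const_mul K) (ae_of_all _ fun s => hK x hx s s.2)
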